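/- arXiv:2205.07344 — 2 statements merged into one kernel-verified Lean document; each statement's English description precedes it below -/
import Mathlib

section
/- Gradient of the smoothed robust objective: suppose Θ ⊆ ℝ^N is open and for all s, a the map θ ↦ π_θ(a|s) is differentiable on Θ. Then for every σ > 0 and every probability distribution ρ on S, J_{σ,ρ} is differentiable on Θ and ∇J_{σ,ρ}(θ) = B(ρ,θ) + γR·(Σ_{s∈S} e^{σ·V_σ^{π_θ}(s)}·B(s,θ)) / ((1−γ)·Σ_{s∈S} e^{σ·V_σ^{π_θ}(s)}). -/
/-!
For every `θ ∈ Θ` the smoothed robust Bellman operator of `π_θ` is a `γ`-contraction in the sup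
norm, and `V_σ^{π_θ}` is its fixed point. If `L` is linear and
`θ' ↦ T_{θ'} (V_θ + L (θ' - θ))` has derivative `L` at `θ`, then the error
`e θ' = V_{θ'} - V_θ - L (θ' - θ)` satisfies `‖e θ'‖ ≤ γ ‖e θ'‖ + o(‖θ' - θ‖)`, so `V` is
differentiable at `θ` with derivative `L`; this needs no strict differentiability of `π`, hence no
implicit function theorem. By the product rule, the gradients `G s` of `V(s)` are therefore
determined by the linearized Bellman equation
`G = g + γ(1-R) P_π G + γR ∑_s softmax(σV)(s) G(s)`, where `g(s) = ∑_a Q(s,a) ∇π(a|s)`.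
Since `d^π` is `(1-γ+γR)` times the resolvent `∑_t (γ(1-R) P_π)^t`, `B` solves this equation
without its last term, and because the rows of `P_π` and the softmax weights sum to one, adding
the constant `γR/(1-γ) ∑_s softmax(σV)(s) B(s)` to `B` accounts for that term.
-/

set_option autoImplicit false

open Finset

/-- Log-sum-exp: `LSE(σ, V) = (1/σ)·log (∑ s, exp (σ · V s))`. -/
noncomputable def lse {S : Type*} [Fintype S] (σ : ℝ) (V : S → ℝ) : ℝ :=
  (1 / σ) * Real.log (∑ s, Real.exp (σ * V s))

/-- The stochastic matrix of a policy `π` under the kernel `p`: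
`P_π(s,s') = ∑ a, π(a|s)·p(s'|s,a)`. -/
noncomputable def pmat {S A : Type*} [Fintype A] (π : S → A → ℝ) (p : S → A → S → ℝ) :
    Matrix S S ℝ :=
  Matrix.of fun s s' => ∑ a, π s a * p s a s'

/-- The discounted visitation distribution
`d^π_s(s') = (1-γ+γR)·∑_{t≥0} (γ(1-R))^t·(P_π^t)(s,s')`. -/
noncomputable def dvisit {S A : Type*} [Fintype S] [Fintype A] [DecidableEq S]
    (γ R : ℝ) (π : S → A → ℝ) (p : S → A → S → ℝ) (s s' : S) : ℝ :=
  (1 - γ + γ * R) * ∑' t : ℕ, (γ * (1 - R)) ^ t * ((pmat π p) ^ t) s s'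

open Filter Topology Asymptotics

section LogSumExp

variable {S : Type*} [Fintype S]

noncomputable def softmax (σ : ℝ) (V : S → ℝ) (s : S) : ℝ :=
  Real.exp (σ * V s) / ∑ s', Real.exp (σ * V s')

variable [Nonempty S]

lemma sum_exp_mul_pos (σ : ℝ) (V : S → ℝ) : 0 < ∑ s, Real.exp (σ * V s) :=
  sum_pos (fun _ _ => Real.exp_pos _) univ_nonempty

lemma softmax_mem_stdSimplex (σ : ℝ) (V : S → ℝ) : softmax σ V ∈ stdSimplex ℝ S :=
  ⟨fun s => div_nonneg (Real.exp_pos _).le (sum_exp_mul_pos σ V).le, by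
    simp only [softmax, ← sum_div, div_self (sum_exp_mul_pos σ V).ne']⟩

lemma lse_add_const {σ : ℝ} (hσ : σ ≠ 0) (V : S → ℝ) (d : ℝ) :
    lse σ (fun s => V s + d) = lse σ V + d := by
  have h : ∑ s, Real.exp (σ * (V s + d)) = Real.exp (σ * d) * ∑ s, Real.exp (σ * V s) := by
    rw [mul_sum]
    exact sum_congr rfl fun s _ => by rw [← Real.exp_add]; ring_nf
  rw [lse, lse, h, Real.log_mul (Real.exp_ne_zero _) (sum_exp_mul_pos σ V).ne', Real.log_exp]
  field_simp
  ring

lemma lse_mono {σ : ℝ} (hσ : 0 < σ) {V W : S → ℝ} (h : V ≤ W) : lse σ V ≤ lse σ W := by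
  unfold lse
  gcongr
  exact h _

lemma abs_lse_sub_lse_le {σ : ℝ} (hσ : 0 < σ) (V W : S → ℝ) : |lse σ V - lse σ W| ≤ ‖V - W‖ := by
  have key : ∀ V W : S → ℝ, lse σ V ≤ lse σ W + ‖V - W‖ := fun V W => by
    rw [← lse_add_const hσ.ne']
    refine lse_mono hσ fun s => ?_
    have := (le_abs_self _).trans (norm_le_pi_norm (V - W) s)
    simp only [Pi.sub_apply] at this
    linarith
  rw [abs_le]
  constructor
  · linarith [key W V, norm_sub_rev V W]
  · linarith [key V W]

lemma hasFDerivAt_lse {σ : ℝ} (hσ : σ ≠ 0) (V : S → ℝ) :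
    HasFDerivAt (lse σ)
      (∑ s, softmax σ V s • (ContinuousLinearMap.proj s : (S → ℝ) →L[ℝ] ℝ)) V := by
  have hsum : HasFDerivAt (fun W : S → ℝ => ∑ s, Real.exp (σ * W s))
      (∑ s, (σ * Real.exp (σ * V s)) • (ContinuousLinearMap.proj s : (S → ℝ) →L[ℝ] ℝ)) V := by
    refine HasFDerivAt.fun_sum fun s _ => ?_
    refine (((hasFDerivAt_apply s V).const_mul σ).exp).congr_fderiv ?_
    rw [smul_smul, mul_comm]
  refine ((hsum.log (sum_exp_mul_pos σ V).ne').const_mul (1 / σ)).congr_fderiv ?_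
  rw [smul_smul, smul_sum]
  refine sum_congr rfl fun s _ => ?_
  rw [smul_smul, softmax]
  congr 1
  field_simp

end LogSumExp

section Stochastic

variable {S A X : Type*} [Fintype S] [AddCommGroup X] [Module ℝ X]

lemma abs_sum_mul_le_norm {w : S → ℝ} (hw : w ∈ stdSimplex ℝ S) (V : S → ℝ) :
    |∑ s, w s * V s| ≤ ‖V‖ :=
  calc |∑ s, w s * V s| ≤ ∑ s, w s * |V s| := by
        refine (abs_sum_le_sum_abs _ _).trans_eq (sum_congr rfl fun s _ => ?_)
        rw [abs_mul, abs_of_nonneg (hw.1 s)]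
    _ ≤ ∑ s, w s * ‖V‖ := by
        gcongr with s
        · exact hw.1 s
        · exact norm_le_pi_norm V s
    _ = ‖V‖ := by rw [← sum_mul, hw.2, one_mul]

lemma pmat_mem_stdSimplex [Fintype A] {π : S → A → ℝ} {p : S → A → S → ℝ}
    (hπ : ∀ s, π s ∈ stdSimplex ℝ A) (hp : ∀ s a, p s a ∈ stdSimplex ℝ S) (s : S) :
    pmat π p s ∈ stdSimplex ℝ S := by
  refine ⟨fun s' => sum_nonneg fun a _ => mul_nonneg ((hπ s).1 a) ((hp s a).1 s'), ?_⟩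
  simp only [pmat, Matrix.of_apply]
  rw [sum_comm]
  simp [← mul_sum, (hp s _).2, (hπ s).2]

lemma sum_pmat_smul [Fintype A] (π : S → A → ℝ) (p : S → A → S → ℝ) (x : S → X) (s : S) :
    ∑ s', pmat π p s s' • x s' = ∑ a, π s a • ∑ s', p s a s' • x s' := by
  simp only [pmat, Matrix.of_apply, sum_smul, smul_sum, smul_smul]
  exact sum_comm

lemma add_smul_eq_add_sum_smul {P : Matrix S S ℝ} (hP : ∀ s, ∑ s', P s s' = 1) {w : S → ℝ}
    (hw : ∑ s, w s = 1) {g B : S → X} {β r : ℝ} (hB : ∀ s, B s = g s + β • ∑ s', P s s' • B s')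
    {m : X} {κ l : ℝ} (hm : ∑ s, w s • B s = l • m) (hκ : κ * (1 - β - r) = r * l) (s : S) :
    B s + κ • m = g s + β • ∑ s', P s s' • (B s' + κ • m) + r • ∑ s', w s' • (B s' + κ • m) := by
  simp only [smul_add, sum_add_distrib, ← sum_smul, hP s, hw, one_smul, hm]
  rw [hB s]
  linear_combination (norm := module) hκ • m

end Stochastic

lemma mul_one_sub_mem_Ico {γ R : ℝ} (hγ : γ ∈ Set.Ico (0 : ℝ) 1) (hR : R ∈ Set.Icc (0 : ℝ) 1) :
    γ * (1 - R) ∈ Set.Ico (0 : ℝ) 1 :=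
  ⟨mul_nonneg hγ.1 (by linarith [hR.2]), by linarith [mul_nonneg hγ.1 hR.1, hγ.2]⟩

section Resolvent

variable {S A X : Type*} [Fintype S] [DecidableEq S] [AddCommGroup X] [Module ℝ X]

lemma summable_pow_smul_of_mem_stdSimplex {P : Matrix S S ℝ} (hP : ∀ s, P s ∈ stdSimplex ℝ S)
    {β : ℝ} (hβ0 : 0 ≤ β) (hβ1 : β < 1) : Summable fun t : ℕ => (β • P) ^ t := by
  let _ := Matrix.linftyOpNormedRing (n := S) (α := ℝ)
  let _ := Matrix.linftyOpNormedSpace (n := S) (m := S) (α := ℝ) (R := ℝ)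
  have _ : CompleteSpace (Matrix S S ℝ) := FiniteDimensional.complete ℝ _
  have hP1 : ‖P‖ ≤ 1 := by
    rw [Matrix.linfty_opNorm_def, NNReal.coe_le_one, Finset.sup_le_iff]
    intro s _
    rw [← NNReal.coe_le_one, NNReal.coe_sum]
    simp [Real.norm_eq_abs, abs_of_nonneg ((hP s).1 _), (hP s).2]
  refine summable_geometric_of_norm_lt_one ?_
  calc ‖β • P‖ ≤ ‖β‖ * ‖P‖ := norm_smul_le β P
    _ ≤ β * 1 := by
      rw [Real.norm_of_nonneg hβ0]
      exact mul_le_mul_of_nonneg_left hP1 hβ0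
    _ < 1 := by linarith

lemma tsum_pow_smul_eq_one_add {P : Matrix S S ℝ} (hP : ∀ s, P s ∈ stdSimplex ℝ S)
    {β : ℝ} (hβ0 : 0 ≤ β) (hβ1 : β < 1) :
    ∑' t : ℕ, (β • P) ^ t = 1 + (β • P) * ∑' t : ℕ, (β • P) ^ t := by
  have h := summable_pow_smul_of_mem_stdSimplex hP hβ0 hβ1
  rw [← h.tsum_mul_left, h.tsum_eq_zero_add, pow_zero]
  simp only [pow_succ']

lemma tsum_pow_smul_apply {P : Matrix S S ℝ} (hP : ∀ s, P s ∈ stdSimplex ℝ S)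
    {β : ℝ} (hβ0 : 0 ≤ β) (hβ1 : β < 1) (s s' : S) :
    (∑' t : ℕ, (β • P) ^ t) s s' = ∑' t : ℕ, β ^ t * (P ^ t) s s' := by
  have h := summable_pow_smul_of_mem_stdSimplex hP hβ0 hβ1
  calc (∑' t : ℕ, (β • P) ^ t) s s' = ∑' t : ℕ, ((β • P) ^ t) s s' :=
        ((h.hasSum.map (Matrix.entryAddMonoidHom ℝ s s')
          (Continuous.matrix_elem continuous_id s s')).tsum_eq).symm
    _ = ∑' t : ℕ, β ^ t * (P ^ t) s s' := by simp [smul_pow]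

lemma sum_smul_eq_add_of_eq_one_add_mul {M P : Matrix S S ℝ} {β : ℝ}
    (hM : M = 1 + (β • P) * M) (g : S → X) (s : S) :
    ∑ s', M s s' • g s' = g s + β • ∑ y, P s y • ∑ s', M y s' • g s' := by
  conv_lhs => rw [hM]
  simp only [Matrix.add_apply, Matrix.one_apply, Matrix.mul_apply, add_smul, sum_add_distrib,
    ite_smul, one_smul, zero_smul, sum_ite_eq, mem_univ, if_true, Matrix.smul_apply, smul_eq_mul,
    sum_smul, smul_sum, smul_smul, mul_assoc]
  rw [sum_comm]

lemma dvisit_eq_tsum_pow_smul_apply [Fintype A] {π : S → A → ℝ} {p : S → A → S → ℝ}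
    (hπ : ∀ s, π s ∈ stdSimplex ℝ A) (hp : ∀ s a, p s a ∈ stdSimplex ℝ S) {γ R : ℝ}
    (hγ : γ ∈ Set.Ico (0 : ℝ) 1) (hR : R ∈ Set.Icc (0 : ℝ) 1) (s s' : S) :
    dvisit γ R π p s s'
      = (1 - γ + γ * R) * (∑' t : ℕ, ((γ * (1 - R)) • pmat π p) ^ t) s s' := by
  rw [tsum_pow_smul_apply (pmat_mem_stdSimplex hπ hp) (mul_one_sub_mem_Ico hγ hR).1
    (mul_one_sub_mem_Ico hγ hR).2, dvisit]

lemma eq_add_sum_pmat_smul_of_eq_dvisit [Fintype A] {π : S → A → ℝ} {p : S → A → S → ℝ}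
    (hπ : ∀ s, π s ∈ stdSimplex ℝ A) (hp : ∀ s a, p s a ∈ stdSimplex ℝ S) {γ R : ℝ}
    (hγ : γ ∈ Set.Ico (0 : ℝ) 1) (hR : R ∈ Set.Icc (0 : ℝ) 1) {g B : S → X}
    (hB : ∀ s, B s = (1 / (1 - γ + γ * R)) • ∑ s', dvisit γ R π p s s' • g s') (s : S) :
    B s = g s + (γ * (1 - R)) • ∑ s', pmat π p s s' • B s' := by
  have hB' : ∀ s, B s = ∑ s', (∑' t : ℕ, ((γ * (1 - R)) • pmat π p) ^ t) s s' • g s' := by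
    intro s
    have h0 : 1 - γ + γ * R ≠ 0 := by linarith [mul_nonneg hγ.1 hR.1, hγ.2]
    simp only [hB s, dvisit_eq_tsum_pow_smul_apply hπ hp hγ hR, smul_sum, smul_smul]
    field_simp
  simp only [hB']
  exact sum_smul_eq_add_of_eq_one_add_mul
    (tsum_pow_smul_eq_one_add (pmat_mem_stdSimplex hπ hp) (mul_one_sub_mem_Ico hγ hR).1
      (mul_one_sub_mem_Ico hγ hR).2) g s

end Resolvent

theorem hasFDerivAt_of_isFixedPt_of_contracting {𝕜 E F : Type*} [NontriviallyNormedField 𝕜]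
    [NormedAddCommGroup E] [NormedSpace 𝕜 E] [NormedAddCommGroup F] [NormedSpace 𝕜 F]
    {Φ : E → F → F} {v : E → F} {L : E →L[𝕜] F} {θ : E} {K : ℝ} (hK : K < 1)
    (hfix : ∀ᶠ θ' in 𝓝 θ, Function.IsFixedPt (Φ θ') (v θ'))
    (hcontr : ∀ᶠ θ' in 𝓝 θ, ∀ V W, ‖Φ θ' V - Φ θ' W‖ ≤ K * ‖V - W‖)
    (hΦ : HasFDerivAt (fun θ' => Φ θ' (v θ + L (θ' - θ))) L θ) :
    HasFDerivAt v L θ := by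
  have hvθ : Φ θ (v θ + L (θ - θ)) = v θ := by
    rw [sub_self, map_zero, add_zero]; exact hfix.self_of_nhds
  have hr := hΦ.isLittleO
  rw [hvθ] at hr
  refine HasFDerivAt.of_isLittleO (IsBigO.trans_isLittleO ?_ hr)
  refine IsBigO.of_bound (1 - K)⁻¹ ?_
  filter_upwards [hfix, hcontr] with θ' hfix' hcontr'
  have hsplit : v θ' - v θ - L (θ' - θ) = (Φ θ' (v θ') - Φ θ' (v θ + L (θ' - θ)))
      + (Φ θ' (v θ + L (θ' - θ)) - v θ - L (θ' - θ)) := by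
    rw [hfix'.eq]; abel
  have hle := hcontr' (v θ') (v θ + L (θ' - θ))
  rw [show v θ' - (v θ + L (θ' - θ)) = v θ' - v θ - L (θ' - θ) by abel] at hle
  have := norm_add_le (Φ θ' (v θ') - Φ θ' (v θ + L (θ' - θ)))
    (Φ θ' (v θ + L (θ' - θ)) - v θ - L (θ' - θ))
  rw [← hsplit] at this
  rw [le_inv_mul_iff₀ (by linarith)]
  linarith

section Bellman

variable {S A : Type*} [Fintype S] (c : S → A → ℝ) (γ R σ : ℝ) (p : S → A → S → ℝ)

noncomputable def robustQ (V : S → ℝ) (s : S) (a : A) : ℝ :=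
  c s a + γ * (1 - R) * ∑ s', p s a s' * V s' + γ * R * lse σ V

noncomputable def robustBellman [Fintype A] (π : S → A → ℝ) (V : S → ℝ) (s : S) : ℝ :=
  ∑ a, π s a * robustQ c γ R σ p V s a

variable {c γ R σ p} [Nonempty S]

lemma hasFDerivAt_robustQ (hσ : σ ≠ 0) (V : S → ℝ) (s : S) (a : A) :
    HasFDerivAt (fun W => robustQ c γ R σ p W s a)
      ((γ * (1 - R)) • ∑ s', p s a s' • (ContinuousLinearMap.proj s' : (S → ℝ) →L[ℝ] ℝ)
        + (γ * R) • ∑ s', softmax σ V s' • (ContinuousLinearMap.proj s' : (S → ℝ) →L[ℝ] ℝ)) V := by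
  refine ((hasFDerivAt_const _ _).add ((HasFDerivAt.fun_sum fun s' _ =>
    (hasFDerivAt_apply s' V).const_mul (p s a s')).const_mul _)).add
    ((hasFDerivAt_lse hσ V).const_mul _) |>.congr_fderiv ?_
  simp only [zero_add, smul_sum]

lemma abs_robustQ_sub_le (hp : ∀ s a, p s a ∈ stdSimplex ℝ S) (hγ : 0 ≤ γ)
    (hR : R ∈ Set.Icc (0 : ℝ) 1) (hσ : 0 < σ) (V W : S → ℝ) (s : S) (a : A) :
    |robustQ c γ R σ p V s a - robustQ c γ R σ p W s a| ≤ γ * ‖V - W‖ := by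
  have hpVW : |∑ s', p s a s' * V s' - ∑ s', p s a s' * W s'| ≤ ‖V - W‖ := by
    rw [← sum_sub_distrib]
    simpa only [Pi.sub_apply, mul_sub] using abs_sum_mul_le_norm (hp s a) (V - W)
  have hlse := abs_lse_sub_lse_le hσ V W
  have h1 : 0 ≤ γ * (1 - R) := mul_nonneg hγ (by linarith [hR.2])
  have h2 : 0 ≤ γ * R := mul_nonneg hγ hR.1
  calc |robustQ c γ R σ p V s a - robustQ c γ R σ p W s a|
      = |γ * (1 - R) * (∑ s', p s a s' * V s' - ∑ s', p s a s' * W s')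
          + γ * R * (lse σ V - lse σ W)| := by unfold robustQ; ring_nf
    _ ≤ γ * (1 - R) * ‖V - W‖ + γ * R * ‖V - W‖ := by
        refine (abs_add_le _ _).trans (add_le_add ?_ ?_) <;>
          rw [abs_mul, abs_of_nonneg (by assumption)] <;> gcongr
    _ = γ * ‖V - W‖ := by ring

lemma norm_robustBellman_sub_le [Fintype A] (hp : ∀ s a, p s a ∈ stdSimplex ℝ S) (hγ : 0 ≤ γ)
    (hR : R ∈ Set.Icc (0 : ℝ) 1) (hσ : 0 < σ) {π : S → A → ℝ}
    (hπ : ∀ s, π s ∈ stdSimplex ℝ A) (V W : S → ℝ) :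
    ‖robustBellman c γ R σ p π V - robustBellman c γ R σ p π W‖ ≤ γ * ‖V - W‖ := by
  refine pi_norm_le_iff_of_nonneg (by positivity) |>.2 fun s => ?_
  have hQ : ‖fun a => robustQ c γ R σ p V s a - robustQ c γ R σ p W s a‖ ≤ γ * ‖V - W‖ :=
    pi_norm_le_iff_of_nonneg (by positivity) |>.2 fun a =>
      abs_robustQ_sub_le hp hγ hR hσ V W s a
  simp only [robustBellman, Pi.sub_apply, Real.norm_eq_abs, ← sum_sub_distrib, ← mul_sub]
  exact (abs_sum_mul_le_norm (hπ s) _).trans hQ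

end Bellman

section RobustValue

open InnerProductSpace

variable {S A : Type*} [Fintype S] [Fintype A] [Nonempty S] {c : S → A → ℝ} {γ R σ : ℝ}
  {p : S → A → S → ℝ} {E : Type*}

lemma hasFDerivAt_robustBellman_apply [NormedAddCommGroup E] [NormedSpace ℝ E]
    (hσ : σ ≠ 0) {π : E → S → A → ℝ} {π' : A → E →L[ℝ] ℝ} {U : E → S → ℝ}
    {U' : E →L[ℝ] S → ℝ} {θ : E} {s : S} (hπ : ∀ a, HasFDerivAt (fun θ' => π θ' s a) (π' a) θ)
    (hU : HasFDerivAt U U' θ) :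
    HasFDerivAt (fun θ' => robustBellman c γ R σ p (π θ') (U θ') s)
      (∑ a, (π θ s a • ContinuousLinearMap.comp ((γ * (1 - R)) • ∑ s', p s a s' •
        (ContinuousLinearMap.proj s' : (S → ℝ) →L[ℝ] ℝ) + (γ * R) • ∑ s', softmax σ (U θ) s' •
        (ContinuousLinearMap.proj s' : (S → ℝ) →L[ℝ] ℝ)) U'
        + robustQ c γ R σ p (U θ) s a • π' a)) θ :=
  HasFDerivAt.fun_sum fun a _ => (hπ a).mul ((hasFDerivAt_robustQ hσ (U θ) s a).comp θ hU)

theorem hasGradientAt_of_isFixedPt_robustBellman [NormedAddCommGroup E] [InnerProductSpace ℝ E]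
    [CompleteSpace E]
    (hp : ∀ s a, p s a ∈ stdSimplex ℝ S) (hγ : γ ∈ Set.Ico (0 : ℝ) 1)
    (hR : R ∈ Set.Icc (0 : ℝ) 1) (hσ : 0 < σ)
    {π : E → S → A → ℝ} {D : S → A → E} {V : E → S → ℝ} {G : S → E} {θ : E}
    (hπ : ∀ᶠ θ' in 𝓝 θ, ∀ s, π θ' s ∈ stdSimplex ℝ A)
    (hD : ∀ s a, HasGradientAt (fun θ' => π θ' s a) (D s a) θ)
    (hV : ∀ᶠ θ' in 𝓝 θ, Function.IsFixedPt (robustBellman c γ R σ p (π θ')) (V θ'))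
    (hG : ∀ s, G s = ∑ a, robustQ c γ R σ p (V θ) s a • D s a
      + (γ * (1 - R)) • ∑ s', pmat (π θ) p s s' • G s' + (γ * R) • ∑ s', softmax σ (V θ) s' • G s')
    (s : S) : HasGradientAt (fun θ' => V θ' s) (G s) θ := by
  have hG' : ∀ s, ∑ a, (π θ s a • ((γ * (1 - R)) • ∑ s', p s a s' • G s'
      + (γ * R) • ∑ s', softmax σ (V θ) s' • G s') + robustQ c γ R σ p (V θ) s a • D s a)
        = G s := by
    intro s
    simp only [hG s, sum_pmat_smul, smul_add, sum_add_distrib, ← sum_smul,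
      (hπ.self_of_nhds s).2, one_smul, smul_comm (π θ s _) (γ * (1 - R)), ← smul_sum]
    abel
  set L : E →L[ℝ] S → ℝ := ContinuousLinearMap.pi fun s => toDual ℝ E (G s)
  have hU : HasFDerivAt (fun θ' => V θ + L (θ' - θ)) L θ :=
    ((L.hasFDerivAt.comp θ ((hasFDerivAt_id θ).sub_const θ)).const_add (V θ)).congr_fderiv
      (L.comp_id)
  have hL : HasFDerivAt V L θ := by
    refine hasFDerivAt_of_isFixedPt_of_contracting hγ.2 hV ?_ (hasFDerivAt_pi.2 fun s => ?_)
    · filter_upwards [hπ] with θ' hπ' using norm_robustBellman_sub_le hp hγ.1 hR hσ hπ'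
    · refine (hasFDerivAt_robustBellman_apply hσ.ne' (fun a => (hD s a).hasFDerivAt)
        hU).congr_fderiv ?_
      ext h
      rw [← hG' s, sub_self, map_zero, add_zero]
      simp [L]
  exact hasGradientAt_iff_hasFDerivAt.2 (hasFDerivAt_pi.1 hL s)

end RobustValue

lemma hasGradientAt_sum_mul {ι E : Type*} [Fintype ι] [NormedAddCommGroup E]
    [InnerProductSpace ℝ E] [CompleteSpace E] {f : ι → E → ℝ} {g : ι → E} {x : E}
    (hf : ∀ i, HasGradientAt (f i) (g i) x) (ρ : ι → ℝ) :
    HasGradientAt (fun y => ∑ i, ρ i * f i y) (∑ i, ρ i • g i) x := by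
  rw [hasGradientAt_iff_hasFDerivAt, map_sum]
  simp only [map_smul]
  exact HasFDerivAt.fun_sum fun i _ => ((hf i).hasFDerivAt).const_mul (ρ i)

theorem stmt_12_general {S A : Type*} [Fintype S] [Fintype A] [Nonempty S] [DecidableEq S]
    {N : ℕ}
    (c : S → A → ℝ)
    (γ : ℝ) (hγ : γ ∈ Set.Ico (0 : ℝ) 1)
    (R : ℝ) (hR : R ∈ Set.Icc (0 : ℝ) 1)
    (p : S → A → S → ℝ) (hp : ∀ s a, p s a ∈ stdSimplex ℝ S)
    (σ : ℝ) (hσ : 0 < σ)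
    (Θ : Set (EuclideanSpace ℝ (Fin N))) (hΘo : IsOpen Θ)
    (π : EuclideanSpace ℝ (Fin N) → S → A → ℝ)
    (hπ : ∀ θ ∈ Θ, ∀ s, π θ s ∈ stdSimplex ℝ A)
    (D : EuclideanSpace ℝ (Fin N) → S → A → EuclideanSpace ℝ (Fin N))
    (hD : ∀ θ ∈ Θ, ∀ s a, HasGradientAt (fun θ' => π θ' s a) (D θ s a) θ)
    (Vσ : EuclideanSpace ℝ (Fin N) → S → ℝ)
    (hVσ : ∀ θ ∈ Θ, ∀ s, Vσ θ s = ∑ a, π θ s a * (c s a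
      + γ * (1 - R) * ∑ s', p s a s' * Vσ θ s'
      + γ * R * lse σ (Vσ θ)))
    (Qσ : EuclideanSpace ℝ (Fin N) → S → A → ℝ)
    (hQσ : ∀ θ ∈ Θ, ∀ s a, Qσ θ s a = c s a + γ * (1 - R) * ∑ s', p s a s' * Vσ θ s'
      + γ * R * lse σ (Vσ θ))
    (B : S → EuclideanSpace ℝ (Fin N) → EuclideanSpace ℝ (Fin N))
    (hB : ∀ s θ, B s θ = (1 / (1 - γ + γ * R)) •
      ∑ s', ∑ a, (dvisit γ R (π θ) p s s' * Qσ θ s' a) • D θ s' a)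
    (ρ : S → ℝ) (hρ : ρ ∈ stdSimplex ℝ S)
    (θ : EuclideanSpace ℝ (Fin N)) (hθ : θ ∈ Θ) :
    HasGradientAt (fun θ' => ∑ s, ρ s * Vσ θ' s)
      ((∑ s, ρ s • B s θ) + (γ * R / ((1 - γ) * ∑ s, Real.exp (σ * Vσ θ s))) •
        ∑ s, Real.exp (σ * Vσ θ s) • B s θ) θ := by
  set Z := ∑ s, Real.exp (σ * Vσ θ s)
  set κ := γ * R / ((1 - γ) * Z)
  set W := ∑ s, Real.exp (σ * Vσ θ s) • B s θ
  have hΘ : Θ ∈ 𝓝 θ := hΘo.mem_nhds hθ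
  have hQ : ∀ s a, Qσ θ s a = robustQ c γ R σ p (Vσ θ) s a := hQσ θ hθ
  set g := fun s => ∑ a, robustQ c γ R σ p (Vσ θ) s a • D θ s a
  have hBrec : ∀ s, B s θ = g s + (γ * (1 - R)) • ∑ s', pmat (π θ) p s s' • B s' θ :=
    eq_add_sum_pmat_smul_of_eq_dvisit (hπ θ hθ) hp hγ hR
      (fun s => by simp only [hB s θ, hQ, g, smul_sum, smul_smul])
  have hsoftmax : ∑ s, softmax σ (Vσ θ) s • B s θ = Z⁻¹ • W := by
    simp only [W, Z, softmax, smul_sum, smul_smul, div_eq_inv_mul]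
  have hκ : κ * (1 - γ * (1 - R) - γ * R) = γ * R * Z⁻¹ := by
    have : 1 - γ ≠ 0 := by linarith [hγ.2]
    have : Z ≠ 0 := (sum_exp_mul_pos σ (Vσ θ)).ne'
    simp only [κ]
    field_simp
    ring
  have hgrad : ∀ s, HasGradientAt (fun θ' => Vσ θ' s) (B s θ + κ • W) θ :=
    hasGradientAt_of_isFixedPt_robustBellman hp hγ hR hσ (eventually_of_mem hΘ hπ)
      (hD θ hθ) (eventually_of_mem hΘ fun θ' hθ' => funext fun s => (hVσ θ' hθ' s).symm)
      (add_smul_eq_add_sum_smul (fun s => (pmat_mem_stdSimplex (hπ θ hθ) hp s).2)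
        (softmax_mem_stdSimplex σ (Vσ θ)).2 hBrec hsoftmax hκ)
  convert hasGradientAt_sum_mul hgrad ρ using 1
  simp only [smul_add, sum_add_distrib, ← sum_smul, hρ.2, one_smul]

/-- **Gradient of the smoothed robust objective (Theorem 4)**: for a differentiable policy
class on an open `Θ ⊆ ℝ^N`, every `σ > 0` and every distribution `ρ` on `S`, the smoothed
objective `J_{σ,ρ}(θ) = ∑_s ρ(s)·V_σ^{π_θ}(s)` is differentiable on `Θ` with
`∇J_{σ,ρ}(θ) = B(ρ,θ) + γR·(∑_s e^{σV_σ(s)}·B(s,θ))/((1-γ)·∑_s e^{σV_σ(s)})`, where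
`B(s,θ) = (1/(1-γ+γR))·∑_{s'} d^{π_θ}_s(s')·∑_a ∇π_θ(a|s')·Q_σ^{π_θ}(s',a)` and
`B(ρ,θ) = ∑_s ρ(s)·B(s,θ)`. -/
theorem stmt_12 {S A : Type*} [Fintype S] [Fintype A] [Nonempty S] [Nonempty A] [DecidableEq S]
    {N : ℕ}
    (c : S → A → ℝ) (hc : ∀ s a, c s a ∈ Set.Icc (0 : ℝ) 1)
    (γ : ℝ) (hγ : γ ∈ Set.Ico (0 : ℝ) 1)
    (R : ℝ) (hR : R ∈ Set.Icc (0 : ℝ) 1)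
    (p : S → A → S → ℝ) (hp : ∀ s a, p s a ∈ stdSimplex ℝ S)
    (σ : ℝ) (hσ : 0 < σ)
    (Θ : Set (EuclideanSpace ℝ (Fin N))) (hΘo : IsOpen Θ)
    (π : EuclideanSpace ℝ (Fin N) → S → A → ℝ)
    (hπ : ∀ θ ∈ Θ, ∀ s, π θ s ∈ stdSimplex ℝ A)
    (D : EuclideanSpace ℝ (Fin N) → S → A → EuclideanSpace ℝ (Fin N))
    (hD : ∀ θ ∈ Θ, ∀ s a, HasGradientAt (fun θ' => π θ' s a) (D θ s a) θ)
    (Vσ : EuclideanSpace ℝ (Fin N) → S → ℝ)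
    (hVσ : ∀ θ ∈ Θ, ∀ s, Vσ θ s = ∑ a, π θ s a * (c s a
      + γ * (1 - R) * ∑ s', p s a s' * Vσ θ s'
      + γ * R * lse σ (Vσ θ)))
    (Qσ : EuclideanSpace ℝ (Fin N) → S → A → ℝ)
    (hQσ : ∀ θ ∈ Θ, ∀ s a, Qσ θ s a = c s a + γ * (1 - R) * ∑ s', p s a s' * Vσ θ s'
      + γ * R * lse σ (Vσ θ))
    (B : S → EuclideanSpace ℝ (Fin N) → EuclideanSpace ℝ (Fin N))
    (hB : ∀ s θ, B s θ = (1 / (1 - γ + γ * R)) •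
      ∑ s', ∑ a, (dvisit γ R (π θ) p s s' * Qσ θ s' a) • D θ s' a)
    (ρ : S → ℝ) (hρ : ρ ∈ stdSimplex ℝ S)
    (θ : EuclideanSpace ℝ (Fin N)) (hθ : θ ∈ Θ) :
    HasGradientAt (fun θ' => ∑ s, ρ s * Vσ θ' s)
      ((∑ s, ρ s • B s θ) + (γ * R / ((1 - γ) * ∑ s, Real.exp (σ * Vσ θ s))) •
        ∑ s, Real.exp (σ * Vσ θ s) • B s θ) θ :=
  stmt_12_general c γ hγ R hR p hp σ hσ Θ hΘo π hπ D hD Vσ hVσ Qσ hQσ B hB ρ hρ θ hθ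
end

section
/- Smoothed value-difference inequality: for any two stationary policies π₁ and π₂, every σ > 0, and every s ∈ S, V_σ^{π₁}(s) − V_σ^{π₂}(s) ≤ (1/(1−γ+γR))·Σ_{s'∈S} d^{π₂}_s(s')·Σ_{a∈A} (π₁(a|s') − π₂(a|s'))·Q_σ^{π₁}(s',a) + (γR/(1−γ+γR))·(LSE(σ, V_σ^{π₁}) − LSE(σ, V_σ^{π₂})). -/
/-!
With `β = γ(1-R)` and `P = P_{π₂}`, subtracting the two smoothed Bellman equations shows that
`W = V₁ - V₂` solves `W = g + β P W`, where `g(s) = ∑ₐ (π₁ - π₂)(a|s) Q₁(s,a) + γR (LSE V₁ - LSE V₂)`: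
the log-sum-exp terms are constants, so they enter only through this shift. A row-stochastic `P`
has `ℓ^∞` operator norm `1`, hence `1 - βP` is inverted by the Neumann series `N = ∑ₜ βᵗ Pᵗ` and
`W = N g`. Finally `d^{π₂}_s = (1 - β) N(s, ·)` and `N 1 = (1 - β)⁻¹ 1`, so the claimed bound
holds with equality.
-/

set_option autoImplicit false

open Finset

namespace Matrix

variable {n : Type*} [Fintype n] [DecidableEq n]

noncomputable def discountedResolvent (β : ℝ) (M : Matrix n n ℝ) : Matrix n n ℝ :=
  ∑' t : ℕ, (β • M) ^ t

section LinftyOpNorm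

attribute [local instance] Matrix.linftyOpNormedRing Matrix.linftyOpNormedAlgebra

lemma linfty_opNorm_le_one_of_mem_rowStochastic {M : Matrix n n ℝ}
    (hM : M ∈ rowStochastic ℝ n) : ‖M‖ ≤ 1 := by
  rw [← NNReal.coe_one, ← coe_nnnorm, NNReal.coe_le_coe, linfty_opNNNorm_def]
  refine Finset.sup_le fun i _ => ?_
  rw [← NNReal.coe_le_coe, NNReal.coe_sum]
  simp only [coe_nnnorm, Real.norm_of_nonneg (nonneg_of_mem_rowStochastic hM),
    sum_row_of_mem_rowStochastic hM, NNReal.coe_one, le_refl]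

lemma linfty_opNorm_smul_lt_one_of_mem_rowStochastic {M : Matrix n n ℝ}
    (hM : M ∈ rowStochastic ℝ n) {β : ℝ} (hβ₀ : 0 ≤ β) (hβ₁ : β < 1) : ‖β • M‖ < 1 :=
  calc ‖β • M‖ ≤ ‖β‖ * ‖M‖ := norm_smul_le β M
    _ ≤ β * 1 := by
      rw [Real.norm_of_nonneg hβ₀]
      exact mul_le_mul_of_nonneg_left (linfty_opNorm_le_one_of_mem_rowStochastic hM) hβ₀
    _ < 1 := by linarith

lemma summable_smul_pow_of_mem_rowStochastic {M : Matrix n n ℝ} (hM : M ∈ rowStochastic ℝ n)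
    {β : ℝ} (hβ₀ : 0 ≤ β) (hβ₁ : β < 1) : Summable fun t : ℕ => (β • M) ^ t :=
  summable_geometric_of_norm_lt_one (linfty_opNorm_smul_lt_one_of_mem_rowStochastic hM hβ₀ hβ₁)

lemma discountedResolvent_mul_one_sub {M : Matrix n n ℝ} (hM : M ∈ rowStochastic ℝ n)
    {β : ℝ} (hβ₀ : 0 ≤ β) (hβ₁ : β < 1) : discountedResolvent β M * (1 - β • M) = 1 :=
  geom_series_mul_neg _ (linfty_opNorm_smul_lt_one_of_mem_rowStochastic hM hβ₀ hβ₁)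

end LinftyOpNorm

lemma discountedResolvent_apply {M : Matrix n n ℝ} (hM : M ∈ rowStochastic ℝ n)
    {β : ℝ} (hβ₀ : 0 ≤ β) (hβ₁ : β < 1) (i j : n) :
    discountedResolvent β M i j = ∑' t : ℕ, β ^ t * (M ^ t) i j := by
  have hs := summable_smul_pow_of_mem_rowStochastic hM hβ₀ hβ₁
  have h : HasSum (fun t : ℕ => ((β • M) ^ t) i j) (discountedResolvent β M i j) :=
    Pi.hasSum.1 (Pi.hasSum.1 hs.hasSum i) j
  simp only [← h.tsum_eq, smul_pow, smul_apply, smul_eq_mul]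

lemma eq_discountedResolvent_mulVec_of_eq_add {M : Matrix n n ℝ} (hM : M ∈ rowStochastic ℝ n)
    {β : ℝ} (hβ₀ : 0 ≤ β) (hβ₁ : β < 1) {g W : n → ℝ} (hW : W = g + β • M *ᵥ W) :
    W = discountedResolvent β M *ᵥ g := by
  have hg : (1 - β • M) *ᵥ W = g := by
    rw [sub_mulVec, one_mulVec, smul_mulVec, sub_eq_iff_eq_add]
    exact hW
  rw [← hg, mulVec_mulVec, discountedResolvent_mul_one_sub hM hβ₀ hβ₁, one_mulVec]

lemma discountedResolvent_mulVec_one {M : Matrix n n ℝ} (hM : M ∈ rowStochastic ℝ n)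
    {β : ℝ} (hβ₀ : 0 ≤ β) (hβ₁ : β < 1) :
    discountedResolvent β M *ᵥ 1 = (1 - β)⁻¹ • 1 := by
  refine (eq_discountedResolvent_mulVec_of_eq_add hM hβ₀ hβ₁ ?_).symm
  rw [mulVec_smul, one_vecMul_of_mem_rowStochastic hM, smul_smul]
  ext
  simp only [Pi.smul_apply, Pi.add_apply, Pi.one_apply, smul_eq_mul, mul_one]
  have : 1 - β ≠ 0 := by linarith
  field_simp
  ring

end Matrix

open Matrix

section Policies

variable {S A : Type*} [Fintype S] [Fintype A]

lemma pmat_mem_rowStochastic [DecidableEq S] {π : S → A → ℝ} {p : S → A → S → ℝ}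
    (hπ : ∀ s, π s ∈ stdSimplex ℝ A) (hp : ∀ s a, p s a ∈ stdSimplex ℝ S) :
    pmat π p ∈ rowStochastic ℝ S := by
  refine mem_rowStochastic_iff_sum.2
    ⟨fun s s' => sum_nonneg fun a _ => mul_nonneg ((hπ s).1 a) ((hp s a).1 s'), fun s => ?_⟩
  simp only [pmat, of_apply]
  rw [sum_comm]
  simp only [← mul_sum, (hp s _).2, mul_one, (hπ s).2]

lemma dvisit_eq_discountedResolvent [DecidableEq S] {π : S → A → ℝ} {p : S → A → S → ℝ}
    (hπ : ∀ s, π s ∈ stdSimplex ℝ A) (hp : ∀ s a, p s a ∈ stdSimplex ℝ S) {γ R : ℝ}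
    (hβ₀ : 0 ≤ γ * (1 - R)) (hβ₁ : γ * (1 - R) < 1) (s s' : S) :
    dvisit γ R π p s s' =
      (1 - γ * (1 - R)) * discountedResolvent (γ * (1 - R)) (pmat π p) s s' := by
  rw [dvisit, discountedResolvent_apply (pmat_mem_rowStochastic hπ hp) hβ₀ hβ₁]
  ring

lemma value_sub_eq_add_mulVec_pmat {c : S → A → ℝ} {p : S → A → S → ℝ} {π₁ π₂ : S → A → ℝ}
    {β κ₁ κ₂ : ℝ} {V₁ V₂ : S → ℝ} {Q₁ : S → A → ℝ} (hπ₂ : ∀ s, ∑ a, π₂ s a = 1)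
    (hV₁ : ∀ s, V₁ s = ∑ a, π₁ s a * (c s a + β * ∑ s', p s a s' * V₁ s' + κ₁))
    (hV₂ : ∀ s, V₂ s = ∑ a, π₂ s a * (c s a + β * ∑ s', p s a s' * V₂ s' + κ₂))
    (hQ₁ : ∀ s a, Q₁ s a = c s a + β * ∑ s', p s a s' * V₁ s' + κ₁) :
    V₁ - V₂ = (fun s => ∑ a, (π₁ s a - π₂ s a) * Q₁ s a) + (κ₁ - κ₂) • 1
      + β • pmat π₂ p *ᵥ (V₁ - V₂) := by
  funext s
  simp only [← hQ₁] at hV₁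
  calc V₁ s - V₂ s = ∑ a, ((π₁ s a - π₂ s a) * Q₁ s a + π₂ s a * (κ₁ - κ₂)
        + β * ∑ s', π₂ s a * p s a s' * (V₁ s' - V₂ s')) := by
        rw [hV₁ s, hV₂ s, ← sum_sub_distrib]
        refine sum_congr rfl fun a _ => ?_
        rw [hQ₁]
        simp only [mul_assoc, ← mul_sum, mul_sub, sum_sub_distrib]
        ring
    _ = _ := by
        simp only [sum_add_distrib, ← sum_mul, hπ₂, one_mul, ← mul_sum, Pi.add_apply,
          Pi.smul_apply, Pi.one_apply, smul_eq_mul, mul_one, mulVec, dotProduct, pmat, of_apply]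
        simp only [Pi.sub_apply, sum_mul]
        rw [sum_comm]

end Policies

theorem stmt_16_general {S A : Type*} [Fintype S] [Fintype A] [DecidableEq S]
    (c : S → A → ℝ)
    (γ : ℝ) (hγ : γ ∈ Set.Ico (0 : ℝ) 1)
    (R : ℝ) (hR : R ∈ Set.Icc (0 : ℝ) 1)
    (p : S → A → S → ℝ) (hp : ∀ s a, p s a ∈ stdSimplex ℝ S)
    (σ : ℝ)
    (π₁ π₂ : S → A → ℝ) (hπ₂ : ∀ s, π₂ s ∈ stdSimplex ℝ A)
    (V₁ V₂ : S → ℝ)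
    (hV₁ : ∀ s, V₁ s = ∑ a, π₁ s a * (c s a + γ * (1 - R) * ∑ s', p s a s' * V₁ s'
      + γ * R * lse σ V₁))
    (hV₂ : ∀ s, V₂ s = ∑ a, π₂ s a * (c s a + γ * (1 - R) * ∑ s', p s a s' * V₂ s'
      + γ * R * lse σ V₂))
    (Q₁ : S → A → ℝ)
    (hQ₁ : ∀ s a, Q₁ s a = c s a + γ * (1 - R) * ∑ s', p s a s' * V₁ s' + γ * R * lse σ V₁)
    (s : S) :
    V₁ s - V₂ s ≤ (1 / (1 - γ + γ * R)) *
        ∑ s', dvisit γ R π₂ p s s' * ∑ a, (π₁ s' a - π₂ s' a) * Q₁ s' a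
      + (γ * R / (1 - γ + γ * R)) * (lse σ V₁ - lse σ V₂) := by
  obtain ⟨hγ₀, hγ₁⟩ := hγ
  obtain ⟨hR₀, hR₁⟩ := hR
  have hβ₀ : 0 ≤ γ * (1 - R) := mul_nonneg hγ₀ (by linarith)
  have hβ₁ : γ * (1 - R) < 1 := by nlinarith
  have hβ : 1 - γ * (1 - R) ≠ 0 := by linarith
  have hM := pmat_mem_rowStochastic hπ₂ hp
  have hdiff := congrFun (eq_discountedResolvent_mulVec_of_eq_add hM hβ₀ hβ₁
    (value_sub_eq_add_mulVec_pmat (fun s => (hπ₂ s).2) hV₁ hV₂ hQ₁)) s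
  rw [mulVec_add, mulVec_smul, discountedResolvent_mulVec_one hM hβ₀ hβ₁] at hdiff
  simp only [Pi.sub_apply, Pi.add_apply, Pi.smul_apply, Pi.one_apply, smul_eq_mul, mul_one,
    mulVec, dotProduct] at hdiff
  rw [hdiff, show 1 - γ + γ * R = 1 - γ * (1 - R) by ring]
  simp only [dvisit_eq_discountedResolvent hπ₂ hp hβ₀ hβ₁, mul_assoc, ← mul_sum]
  field_simp
  exact le_rfl

/-- **Smoothed value-difference inequality**: for stationary policies `π₁, π₂`, `σ > 0` and
any state `s`,
`V_σ^{π₁}(s) - V_σ^{π₂}(s) ≤ (1/(1-γ+γR))·∑_{s'} d^{π₂}_s(s')·∑_a (π₁(a|s')-π₂(a|s'))·Q_σ^{π₁}(s',a)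
  + (γR/(1-γ+γR))·(LSE(σ,V_σ^{π₁}) - LSE(σ,V_σ^{π₂}))`. -/
theorem stmt_16 {S A : Type*} [Fintype S] [Fintype A] [Nonempty S] [Nonempty A] [DecidableEq S]
    (c : S → A → ℝ) (hc : ∀ s a, c s a ∈ Set.Icc (0 : ℝ) 1)
    (γ : ℝ) (hγ : γ ∈ Set.Ico (0 : ℝ) 1)
    (R : ℝ) (hR : R ∈ Set.Icc (0 : ℝ) 1)
    (p : S → A → S → ℝ) (hp : ∀ s a, p s a ∈ stdSimplex ℝ S)
    (σ : ℝ) (hσ : 0 < σ)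
    (π₁ π₂ : S → A → ℝ) (hπ₁ : ∀ s, π₁ s ∈ stdSimplex ℝ A) (hπ₂ : ∀ s, π₂ s ∈ stdSimplex ℝ A)
    (V₁ V₂ : S → ℝ)
    (hV₁ : ∀ s, V₁ s = ∑ a, π₁ s a * (c s a + γ * (1 - R) * ∑ s', p s a s' * V₁ s'
      + γ * R * lse σ V₁))
    (hV₂ : ∀ s, V₂ s = ∑ a, π₂ s a * (c s a + γ * (1 - R) * ∑ s', p s a s' * V₂ s'
      + γ * R * lse σ V₂))
    (Q₁ : S → A → ℝ)
    (hQ₁ : ∀ s a, Q₁ s a = c s a + γ * (1 - R) * ∑ s', p s a s' * V₁ s' + γ * R * lse σ V₁)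
    (s : S) :
    V₁ s - V₂ s ≤ (1 / (1 - γ + γ * R)) *
        ∑ s', dvisit γ R π₂ p s s' * ∑ a, (π₁ s' a - π₂ s' a) * Q₁ s' a
      + (γ * R / (1 - γ + γ * R)) * (lse σ V₁ - lse σ V₂) :=
  stmt_16_general c γ hγ R hR p hp σ π₁ π₂ hπ₂ V₁ V₂ hV₁ hV₂ Q₁ hQ₁ s
end
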